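/- arXiv:1701.07151 — 3 statements merged into one kernel-verified Lean document; each statement's English description precedes it below -/
import Mathlib

section
/- The Möbius transformation f_m maps the half-circle C_{4(4m)} = {z ∈ ℍ : |z - 16m| = 1} onto the half-circle C_{4(4m+2)} = {z ∈ ℍ : |z - (16m+8)| = 1}; explicitly, if z ∈ ℍ and |z - 16m| = 1, then |f_m(z) - (16m+8)| = 1. -/
/- `f_m(z) - (16m+8) = -1/(z - 16m)`, and `w ↦ -1/w` preserves the unit circle, so `f_m` carries
the unit circle about `16m` onto the unit circle about `16m + 8`. -/

theorem div_sub_center_eq_neg_inv {K : Type*} [Field K] {a b z : K} (hz : z - b ≠ 0) :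
    (a * z - (1 + b * a)) / (z - b) - a = -1 / (z - b) := by
  field_simp
  ring

theorem norm_div_sub_center_eq_one {K : Type*} [NormedField K] {a b z : K}
    (hz : ‖z - b‖ = 1) :
    ‖(a * z - (1 + b * a)) / (z - b) - a‖ = 1 := by
  have hne : z - b ≠ 0 := norm_ne_zero_iff.mp (by rw [hz]; exact one_ne_zero)
  rw [div_sub_center_eq_neg_inv hne, norm_div, hz, norm_neg, norm_one, div_one]

theorem fm_maps_circle_general (m : ℤ) (z : ℂ)
    (hc : ‖z - 16 * m‖ = 1) :
    ‖(((16 * m + 8) * z - (1 + 16 * m * (16 * m + 8))) / (z - 16 * m))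
        - (16 * m + 8)‖ = 1 :=
  norm_div_sub_center_eq_one hc

/-- `f_m` maps the half-circle `C_{4(4m)}` onto the half-circle `C_{4(4m+2)}`. -/
theorem fm_maps_circle (m : ℤ) (z : ℂ) (hz : 0 < z.im)
    (hc : ‖z - 16 * m‖ = 1) :
    ‖(((16 * m + 8) * z - (1 + 16 * m * (16 * m + 8))) / (z - 16 * m))
        - (16 * m + 8)‖ = 1 :=
  fm_maps_circle_general m z hc
end

section
/- The Möbius transformation f_m maps the inside of C_{4(4m)} onto the outside of C_{4(4m+2)}: if z ∈ ℍ with 0 < |z - 16m| < 1, then |f_m(z) - (16m+8)| > 1. -/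
/-! `f_m(z) - (16m+8) = -1/(z - 16m)`, so `f_m` inverts distances to the centre `16m`. -/

theorem div_sub_eq_neg_inv {K : Type*} [Field K] (a b z : K) (hz : z - b ≠ 0) :
    (a * z - (1 + b * a)) / (z - b) - a = -(z - b)⁻¹ := by
  field_simp
  ring

theorem one_lt_norm_neg_inv {K : Type*} [NormedDivisionRing K] {w : K} (h0 : 0 < ‖w‖)
    (h1 : ‖w‖ < 1) : 1 < ‖-w⁻¹‖ := by
  rwa [norm_neg, norm_inv, one_lt_inv₀ h0]

theorem fm_inside_to_outside_general (m : ℤ) (z : ℂ)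
    (h0 : 0 < ‖z - 16 * m‖) (h1 : ‖z - 16 * m‖ < 1) :
    1 < ‖(((16 * m + 8) * z - (1 + 16 * m * (16 * m + 8))) / (z - 16 * m))
        - (16 * m + 8)‖ := by
  rw [div_sub_eq_neg_inv _ _ _ (norm_pos_iff.mp h0)]
  exact one_lt_norm_neg_inv h0 h1

/-- `f_m` maps the inside of `C_{4(4m)}` into the outside of `C_{4(4m+2)}`. -/
theorem fm_inside_to_outside (m : ℤ) (z : ℂ) (hz : 0 < z.im)
    (h0 : 0 < ‖z - 16 * m‖) (h1 : ‖z - 16 * m‖ < 1) :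
    1 < ‖(((16 * m + 8) * z - (1 + 16 * m * (16 * m + 8))) / (z - 16 * m))
        - (16 * m + 8)‖ :=
  fm_inside_to_outside_general m z h0 h1
end

section
/- If z ∈ ℍ lies in the interior of the fundamental polygon P (i.e., |z - 4n| > 1 for all n ∈ ℤ), then f_m(z) ∉ interior(P) for every m ∈ ℤ; in particular f_m(z) ≠ z, so no f_m fixes any interior point of P. -/
/-! `f_m` is the Möbius map `z ↦ a - 1 / (z - c)` with `c = 16m` and `a = 16m + 8 = 4(4m + 2)`.
It sends every point at distance `> 1` from `c` strictly inside the unit disc around `a`,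
a point of `4ℤ`, so its image violates the defining inequality of the interior of `P` at
`n = 4m + 2`. Since `z` itself lies in that interior, `f_m z ≠ z`. -/

lemma mobius_sub_eq_neg_inv (a c z : ℂ) (hz : z ≠ c) :
    (a * z - (1 + c * a)) / (z - c) - a = -(z - c)⁻¹ := by
  have hzc : z - c ≠ 0 := sub_ne_zero.mpr hz
  field_simp
  ring

lemma norm_mobius_sub_lt_one (a c z : ℂ) (hz : 1 < ‖z - c‖) :
    ‖(a * z - (1 + c * a)) / (z - c) - a‖ < 1 := by
  have hzc : z ≠ c := by
    rintro rfl
    norm_num at hz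
  rw [mobius_sub_eq_neg_inv a c z hzc, norm_neg, norm_inv]
  exact inv_lt_one_of_one_lt₀ hz

/-- If `z` lies in the interior of the fundamental polygon `P`, then `f_m z` does not,
and in particular `f_m` fixes no interior point of `P`. -/
theorem fm_moves_interior_points (m : ℤ) (z : ℂ) (hz : 0 < z.im)
    (hint : ∀ n : ℤ, 1 < ‖z - 4 * n‖) :
    (((16 * m + 8) * z - (1 + 16 * m * (16 * m + 8))) / (z - 16 * m) ∉
      {w : ℂ | 0 < w.im ∧ ∀ n : ℤ, 1 < ‖w - 4 * n‖}) ∧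
    ((16 * m + 8) * z - (1 + 16 * m * (16 * m + 8))) / (z - 16 * m) ≠ z := by
  have hpole : (4 : ℂ) * ((4 * m : ℤ) : ℂ) = 16 * m := by push_cast; ring
  have hcenter : (4 : ℂ) * ((4 * m + 2 : ℤ) : ℂ) = 16 * m + 8 := by push_cast; ring
  have hfar : 1 < ‖z - 16 * m‖ := by simpa only [hpole] using hint (4 * m)
  have hnear := norm_mobius_sub_lt_one (16 * m + 8) (16 * m) z hfar
  have hnotin : ((16 * m + 8) * z - (1 + 16 * m * (16 * m + 8))) / (z - 16 * m) ∉
      {w : ℂ | 0 < w.im ∧ ∀ n : ℤ, 1 < ‖w - 4 * n‖} := by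
    rintro ⟨-, hw⟩
    have := hw (4 * m + 2)
    rw [hcenter] at this
    linarith
  refine ⟨hnotin, fun hfix => hnotin ?_⟩
  rw [hfix]
  exact ⟨hz, hint⟩
end
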